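/- arXiv:2012.04004 — 2 statements merged into one kernel-verified Lean document; each statement's English description precedes it below -/
import Mathlib

section
/- Let A be a τ-algebra, let V be the variety generated by A, and let θ be a congruence of F_k^V such that F_k^V/θ belongs to the pseudovariety of finitely generated algebras generated by A. Then, identifying F_k^V with the k-ary term operations of A, there exist m ≥ 1 and tuples ā¹, …, ā^m ∈ A^k such that U_{ā¹} ∩ ⋯ ∩ U_{ā^m} ⊆ θ, where U_ā = {(f,g) : f, g k-ary term operations of A with f(ā) = g(ā)}. -/
/-! Universal-algebra preamble: functional signatures, algebras (with nonempty
carriers, as usual in universal algebra), terms, homomorphisms, congruences,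
quotients, free algebras, and the operators/uniformities of the paper.

Families indexed over the components of a clone are indexed by `k : ℕ`, where
index `k` stands for the component of arity `k + 1` (so all arities `≥ 1`). -/

/-- A functional signature: a type of function symbols together with arities. -/
structure Signature : Type 1 where
  F : Type
  arity : F → ℕ

/-- A τ-algebra: a nonempty carrier together with an interpretation of each symbol. -/
structure Alg (σ : Signature) : Type 1 where
  carrier : Type
  nonempty : Nonempty carrier
  op : ∀ f : σ.F, (Fin (σ.arity f) → carrier) → carrier

/-- Abstract τ-terms over the variables x_1, …, x_n. -/
inductive Trm (σ : Signature) (n : ℕ) : Type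
  | var : Fin n → Trm σ n
  | app : ∀ f : σ.F, (Fin (σ.arity f) → Trm σ n) → Trm σ n

variable {σ : Signature}

/-- Evaluation of a term in an algebra under a valuation of the variables. -/
def Trm.eval {n : ℕ} (A : Alg σ) (v : Fin n → A.carrier) : Trm σ n → A.carrier
  | .var i => v i
  | .app f ts => A.op f fun i => Trm.eval A v (ts i)

/-- The term operation `t^A` induced on `A` by the term `t`. -/
def termOp {n : ℕ} (A : Alg σ) (t : Trm σ n) : (Fin n → A.carrier) → A.carrier :=
  fun v => t.eval A v

/-- Homomorphisms of τ-algebras. -/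
def IsHom (A B : Alg σ) (h : A.carrier → B.carrier) : Prop :=
  ∀ (f : σ.F) (x : Fin (σ.arity f) → A.carrier), h (A.op f x) = B.op f fun i => h (x i)

/-- Isomorphism of τ-algebras. -/
def Isomorphic (A B : Alg σ) : Prop :=
  ∃ h : A.carrier → B.carrier, IsHom A B h ∧ Function.Bijective h

/-- Membership in the subuniverse generated by `S`. -/
inductive InClosure (A : Alg σ) (S : Set A.carrier) : A.carrier → Prop
  | base : ∀ a ∈ S, InClosure A S a
  | app : ∀ (f : σ.F) (x : Fin (σ.arity f) → A.carrier),
      (∀ i, InClosure A S (x i)) → InClosure A S (A.op f x)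

/-- An algebra is finitely generated if a finite subset generates it. -/
def FinGen (A : Alg σ) : Prop :=
  ∃ S : Set A.carrier, S.Finite ∧ ∀ a, InClosure A S a

/-- Product of a family of algebras. -/
def PiAlg {ι : Type} (A : ι → Alg σ) : Alg σ where
  carrier := ∀ i, (A i).carrier
  nonempty := ⟨fun i => Classical.choice (A i).nonempty⟩
  op f x := fun i => (A i).op f fun j => x j i

/-- A congruence: an equivalence relation compatible with all operations. -/
def IsCongruence (A : Alg σ) (r : A.carrier → A.carrier → Prop) : Prop :=
  Equivalence r ∧ ∀ (f : σ.F) (x y : Fin (σ.arity f) → A.carrier),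
    (∀ i, r (x i) (y i)) → r (A.op f x) (A.op f y)

/-- Bundled congruences on an algebra. -/
structure Cong (A : Alg σ) : Type where
  r : A.carrier → A.carrier → Prop
  iscon : IsCongruence A r

/-- The quotient algebra of `A` by (a relation which is intended to be) a congruence. -/
noncomputable def quotAlg (A : Alg σ) (r : A.carrier → A.carrier → Prop) : Alg σ where
  carrier := Quot r
  nonempty := ⟨Quot.mk r (Classical.choice A.nonempty)⟩
  op f x := Quot.mk r (A.op f fun i => (x i).out)

/-- The subalgebra of `A` on a nonempty subset closed under the operations. -/
def subAlg (A : Alg σ) (S : Set A.carrier) (hne : S.Nonempty)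
    (hcl : ∀ (f : σ.F) (x : Fin (σ.arity f) → A.carrier), (∀ i, x i ∈ S) → A.op f x ∈ S) :
    Alg σ where
  carrier := {a : A.carrier // a ∈ S}
  nonempty := ⟨⟨hne.choose, hne.choose_spec⟩⟩
  op f x := ⟨A.op f fun i => (x i).1, hcl f _ fun i => (x i).2⟩

/-- The subalgebra of `A` generated by a nonempty subset `S`. -/
def genSubAlg (A : Alg σ) (S : Set A.carrier) (hne : S.Nonempty) : Alg σ where
  carrier := {a : A.carrier // InClosure A S a}
  nonempty := ⟨⟨hne.choose, InClosure.base _ hne.choose_spec⟩⟩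
  op f x := ⟨A.op f fun i => (x i).1, InClosure.app f _ fun i => (x i).2⟩

/-- H: homomorphic images of members of `K`. -/
def Hcl (K : Set (Alg σ)) : Set (Alg σ) :=
  {B | ∃ A ∈ K, ∃ h : A.carrier → B.carrier, IsHom A B h ∧ Function.Surjective h}

/-- I: isomorphic copies of members of `K`. -/
def Icl (K : Set (Alg σ)) : Set (Alg σ) := {B | ∃ A ∈ K, Isomorphic A B}

/-- S: isomorphic copies of subalgebras (i.e. algebras embedding into members) of `K`. -/
def Scl (K : Set (Alg σ)) : Set (Alg σ) :=
  {B | ∃ A ∈ K, ∃ e : B.carrier → A.carrier, IsHom B A e ∧ Function.Injective e}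

/-- P_f: isomorphic copies of finite (nonempty) products of members of `K`. -/
def Pfcl (K : Set (Alg σ)) : Set (Alg σ) :=
  {B | ∃ (n : ℕ) (A : Fin (n + 1) → Alg σ), (∀ i, A i ∈ K) ∧ Isomorphic (PiAlg A) B}

/-- S_f: isomorphic copies of finitely generated subalgebras of members of `K`. -/
def Sf (K : Set (Alg σ)) : Set (Alg σ) :=
  {B | FinGen B ∧ ∃ A ∈ K, ∃ e : B.carrier → A.carrier, IsHom B A e ∧ Function.Injective e}

/-- S P_f: isomorphic copies of finitely generated subalgebras of finite products
of members of `K`. -/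
def SPf (K : Set (Alg σ)) : Set (Alg σ) :=
  {B | FinGen B ∧ ∃ (n : ℕ) (A : Fin (n + 1) → Alg σ), (∀ i, A i ∈ K) ∧
    ∃ e : B.carrier → (PiAlg A).carrier, IsHom B (PiAlg A) e ∧ Function.Injective e}

/-- A pseudovariety of finitely generated algebras: a class of finitely generated
algebras closed under homomorphic images and under isomorphic copies of finitely
generated subalgebras of finite products of its members. -/
def IsPseudovarietyFG (C : Set (Alg σ)) : Prop :=
  (∀ A ∈ C, FinGen A) ∧ Hcl C ⊆ C ∧ SPf C ⊆ C

/-- A pseudovariety of finite algebras: a class of finite algebras closed under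
finite products, subalgebras and homomorphic images. -/
def IsPseudovarietyFin (C : Set (Alg σ)) : Prop :=
  (∀ A ∈ C, Finite A.carrier) ∧ Hcl C ⊆ C ∧ Scl C ⊆ C ∧ Pfcl C ⊆ C

/-- A variety: a class closed under arbitrary products, subalgebras and
homomorphic images. -/
def IsVariety (V : Set (Alg σ)) : Prop :=
  (∀ (ι : Type) (A : ι → Alg σ), (∀ i, A i ∈ V) → PiAlg A ∈ V) ∧
  Scl V ⊆ V ∧ Hcl V ⊆ V

/-- The identities of the class `C`: `s` and `t` are identified iff they induce the
same operation on every member of `C`. -/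
def FreeCon (C : Set (Alg σ)) (n : ℕ) : Trm σ n → Trm σ n → Prop :=
  fun s t => ∀ A ∈ C, ∀ v : Fin n → A.carrier, s.eval A v = t.eval A v

/-- `freeAlg C k` is `F_{k+1}^C`, the free algebra for `C` on `k + 1` generators:
the term algebra on the variables `x_1, …, x_{k+1}` modulo the identities of `C`.
(The index `k` stands for arity `k + 1`, so all components have arity `≥ 1`.) -/
noncomputable def freeAlg (C : Set (Alg σ)) (k : ℕ) : Alg σ where
  carrier := Quot (FreeCon C (k + 1))
  nonempty := ⟨Quot.mk _ (Trm.var 0)⟩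
  op f x := Quot.mk _ (Trm.app f fun i => (x i).out)

/-- The finitely generated members of `V`. -/
def Vfg (V : Set (Alg σ)) : Set (Alg σ) := {A | A ∈ V ∧ FinGen A}

/-- `B^K`: the congruences of the free algebras whose quotient is isomorphic to a
member of `K`. -/
def BK (V K : Set (Alg σ)) (k : ℕ) : Set (Cong (freeAlg V k)) :=
  {θ | quotAlg (freeAlg V k) θ.r ∈ Icl K}

/-- `K^B`: isomorphic copies of the quotients of free algebras by congruences in `B`. -/
def KB (V : Set (Alg σ)) (B : ∀ k : ℕ, Set (Cong (freeAlg V k))) : Set (Alg σ) :=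
  Icl {A | ∃ (k : ℕ), ∃ θ ∈ B k, A = quotAlg (freeAlg V k) θ.r}

/-- `θ/t̄`: the inverse substitution of the congruence `θ` along the tuple `t̄`;
`s (θ/t̄) s'` iff `s(t₁,…,t_m) θ s'(t₁,…,t_m)`. -/
noncomputable def conSubstRel {V : Set (Alg σ)} {k : ℕ} (θ : Cong (freeAlg V k)) {m : ℕ}
    (t : Fin (m + 1) → (freeAlg V k).carrier) :
    (freeAlg V m).carrier → (freeAlg V m).carrier → Prop :=
  fun s s' => θ.r (Trm.eval (freeAlg V k) t s.out) (Trm.eval (freeAlg V k) t s'.out)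

/-- A family of congruences is closed under inverse substitution. -/
def InvSubstClosed (V : Set (Alg σ)) (B : ∀ k : ℕ, Set (Cong (freeAlg V k))) : Prop :=
  ∀ (k m : ℕ), ∀ θ ∈ B k, ∀ t : Fin (m + 1) → (freeAlg V k).carrier,
    ∃ θ' ∈ B m, θ'.r = conSubstRel θ t

/-- A family of congruences is closed under finite intersections (componentwise). -/
def InterClosed (V : Set (Alg σ)) (B : ∀ k : ℕ, Set (Cong (freeAlg V k))) : Prop :=
  ∀ (k n : ℕ) (θs : Fin (n + 1) → Cong (freeAlg V k)), (∀ i, θs i ∈ B k) →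
    ∃ θ' ∈ B k, θ'.r = fun a b => ∀ i, (θs i).r a b

/-- A family of congruences is upward closed (componentwise). -/
def UpClosed (V : Set (Alg σ)) (B : ∀ k : ℕ, Set (Cong (freeAlg V k))) : Prop :=
  ∀ (k : ℕ), ∀ θ ∈ B k, ∀ ψ : Cong (freeAlg V k), (∀ a b, θ.r a b → ψ.r a b) → ψ ∈ B k

/-- A filter on `X × X` is a uniformity: every entourage contains the diagonal, the
converse of an entourage is an entourage, and the generalised triangle inequality. -/
def IsUniformity {X : Type} (u : Filter (X × X)) : Prop :=
  (∀ U ∈ u, ∀ x : X, (x, x) ∈ U) ∧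
  (∀ U ∈ u, {p : X × X | (p.2, p.1) ∈ U} ∈ u) ∧
  (∀ U ∈ u, ∃ W ∈ u, ∀ x y z : X, (x, y) ∈ W → (y, z) ∈ W → (x, z) ∈ U)

/-- `U^C` (the component of index `k`, i.e. of arity `k + 1`): the filter on
`F_{k+1}^V × F_{k+1}^V` generated by the congruences `θ` of `F_{k+1}^V` such that
`F_{k+1}^V/θ` is isomorphic to a member of `C`. -/
noncomputable def unifC (V C : Set (Alg σ)) (k : ℕ) :
    Filter ((freeAlg V k).carrier × (freeAlg V k).carrier) :=
  Filter.generate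
    {U | ∃ θ : Cong (freeAlg V k), quotAlg (freeAlg V k) θ.r ∈ Icl C ∧ U = {p | θ.r p.1 p.2}}

/-- The `(k+1)`-ary part of `Clo(A)`: the `(k+1)`-ary term operations of `A`. -/
def CloK (A : Alg σ) (k : ℕ) : Type :=
  {g : (Fin (k + 1) → A.carrier) → A.carrier // ∃ t : Trm σ (k + 1), g = termOp A t}

/-- The uniformity of pointwise convergence on the `(k+1)`-ary part of `Clo(A)`:
generated by the sets `U_ā = {(f, g) | f(ā) = g(ā)}`. -/
noncomputable def ptwUnif (A : Alg σ) (k : ℕ) : Filter (CloK A k × CloK A k) :=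
  Filter.generate {U | ∃ a : Fin (k + 1) → A.carrier, U = {p | p.1.1 a = p.2.1 a}}

/-- The natural map from the free algebra for `C` onto `Clo(A)`, sending the class
of a term `t` to the term operation `t^A`. -/
noncomputable def natMap (C : Set (Alg σ)) (A : Alg σ) (k : ℕ) :
    (freeAlg C k).carrier → CloK A k :=
  fun q => ⟨termOp A q.out, q.out, rfl⟩

/-- The natural map between the free algebras of two classes (class of `t` to
class of `t`). -/
noncomputable def freeNatMap (C D : Set (Alg σ)) (k : ℕ) :
    (freeAlg C k).carrier → (freeAlg D k).carrier :=
  fun q => Quot.mk _ q.out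

/-- The natural map `Clo(A) → Clo(B)`, sending `t^A` to `t^B`. -/
noncomputable def cloNatMap (A B : Alg σ) (k : ℕ) : CloK A k → CloK B k :=
  fun g => ⟨termOp B (Classical.choose g.2), Classical.choose g.2, rfl⟩

/-- The variety generated by `A`. -/
def varietyGen (A : Alg σ) : Set (Alg σ) :=
  {B | ∀ V : Set (Alg σ), IsVariety V → A ∈ V → B ∈ V}

/-- The pseudovariety generated by `A`: the smallest class containing `A` closed
under finite products, subalgebras and homomorphic images. -/
def psvGen (A : Alg σ) : Set (Alg σ) :=
  {B | ∀ C : Set (Alg σ), A ∈ C → Hcl C ⊆ C → Scl C ⊆ C → Pfcl C ⊆ C → B ∈ C}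

/-- The pseudovariety of finitely generated algebras generated by `A`: the finitely
generated members of the pseudovariety generated by `A`. -/
def psvFgGen (A : Alg σ) : Set (Alg σ) := {B | FinGen B ∧ B ∈ psvGen A}

/-! Call `B` *finitely determined* if every homomorphism `F_k^V → B` is determined by the
values at finitely many tuples `ā ∈ A^k` of the corresponding term operations of `A`, i.e. its
kernel contains a finite intersection `U_{ā¹} ∩ ⋯ ∩ U_{ā^m}`. A homomorphism `F_k^V → A` is
evaluation at the images of the generators, so `A` is finitely determined. The property passes
to subalgebras, to homomorphic images (lift the images of the generators), and to finite
products (take the union of the finite sets of tuples). Hence it holds throughout the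
pseudovariety generated by `A`, in particular for `F_k^V/θ`, and the kernel of the quotient map
is `θ`. -/

theorem IsHom.comp {B B' B'' : Alg σ} {g : B.carrier → B'.carrier}
    {g' : B'.carrier → B''.carrier} (hg : IsHom B B' g) (hg' : IsHom B' B'' g') :
    IsHom B B'' (g' ∘ g) := fun f x => by
  simp only [Function.comp_apply, hg f x, hg' f]

theorem isHom_quot_mk {B : Alg σ} (θ : Cong B) : IsHom B (quotAlg B θ.r) (Quot.mk θ.r) :=
  fun f x => Quot.sound <| θ.iscon.2 f _ _ fun i =>
    θ.iscon.1.symm <| (θ.iscon.1.quot_mk_eq_iff _ _).mp (Quot.out_eq (Quot.mk θ.r (x i)))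

section FreeAlgebra

variable {C : Set (Alg σ)} {k : ℕ}

theorem FreeCon.equivalence (C : Set (Alg σ)) (n : ℕ) : Equivalence (FreeCon C n) :=
  ⟨fun _ _ _ _ => rfl, fun h B hB v => (h B hB v).symm,
   fun h₁ h₂ B hB v => (h₁ B hB v).trans (h₂ B hB v)⟩

def freeAlg.mk (C : Set (Alg σ)) (k : ℕ) (t : Trm σ (k + 1)) : (freeAlg C k).carrier :=
  Quot.mk _ t

theorem freeAlg.out_mk (t : Trm σ (k + 1)) : FreeCon C (k + 1) (freeAlg.mk C k t).out t :=
  ((FreeCon.equivalence C (k + 1)).quot_mk_eq_iff _ _).mp (Quot.out_eq _)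

theorem freeAlg.mk_out (p : (freeAlg C k).carrier) : freeAlg.mk C k p.out = p :=
  Quot.out_eq p

theorem freeAlg.mk_app (f : σ.F) (ts : Fin (σ.arity f) → Trm σ (k + 1)) :
    freeAlg.mk C k (Trm.app f ts) = (freeAlg C k).op f fun i => freeAlg.mk C k (ts i) :=
  Quot.sound fun B hB v => congrArg (B.op f) <| funext fun i =>
    (freeAlg.out_mk (ts i) B hB v).symm

theorem freeAlg.hom_ext {B : Alg σ} {φ ψ : (freeAlg C k).carrier → B.carrier}
    (hφ : IsHom (freeAlg C k) B φ) (hψ : IsHom (freeAlg C k) B ψ)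
    (hgen : ∀ i, φ (freeAlg.mk C k (Trm.var i)) = ψ (freeAlg.mk C k (Trm.var i))) : φ = ψ := by
  have on_terms : ∀ t, φ (freeAlg.mk C k t) = ψ (freeAlg.mk C k t) := by
    intro t
    induction t with
    | var i => exact hgen i
    | app f ts ih =>
      rw [freeAlg.mk_app, hφ, hψ]
      exact congrArg (B.op f) (funext ih)
  funext p
  simpa only [freeAlg.mk_out] using on_terms p.out

variable {B : Alg σ}

theorem freeAlg.isHom_eval (hB : B ∈ C) (u : Fin (k + 1) → B.carrier) :
    IsHom (freeAlg C k) B fun p => Trm.eval B u p.out := fun f x =>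
  freeAlg.out_mk (Trm.app f fun i => (x i).out) B hB u

theorem freeAlg.eval_out_var (hB : B ∈ C) (u : Fin (k + 1) → B.carrier) (i : Fin (k + 1)) :
    Trm.eval B u (freeAlg.mk C k (Trm.var i)).out = u i :=
  freeAlg.out_mk (Trm.var i) B hB u

theorem IsHom.eq_eval_of_freeAlg (hB : B ∈ C) {h : (freeAlg C k).carrier → B.carrier}
    (hh : IsHom (freeAlg C k) B h) :
    h = fun p => Trm.eval B (fun i => h (freeAlg.mk C k (Trm.var i))) p.out :=
  freeAlg.hom_ext hh (freeAlg.isHom_eval hB _) fun i => (freeAlg.eval_out_var hB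
    (fun i => h (freeAlg.mk C k (Trm.var i))) i).symm

end FreeAlgebra

theorem varietyGen_isVariety (A : Alg σ) : IsVariety (varietyGen A) :=
  ⟨fun ι As hAs V hV hA => hV.1 ι As fun i => hAs i V hV hA,
   fun _ ⟨A', hA', e, he, hinj⟩ V hV hA => hV.2.1 ⟨A', hA' V hV hA, e, he, hinj⟩,
   fun _ ⟨A', hA', h, hh, hsurj⟩ V hV hA => hV.2.2 ⟨A', hA' V hV hA, h, hh, hsurj⟩⟩

theorem self_mem_varietyGen (A : Alg σ) : A ∈ varietyGen A := fun _ _ hA => hA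

def FinitelyDetermined (C : Set (Alg σ)) (A : Alg σ) (k : ℕ) (B : Alg σ) : Prop :=
  B ∈ C ∧ ∀ h : (freeAlg C k).carrier → B.carrier, IsHom (freeAlg C k) B h →
    ∃ s : Finset (Fin (k + 1) → A.carrier), ∀ p q : (freeAlg C k).carrier,
      (∀ a ∈ s, Trm.eval A a p.out = Trm.eval A a q.out) → h p = h q

namespace FinitelyDetermined

variable {C : Set (Alg σ)} {A : Alg σ} {k : ℕ}

theorem self (hA : A ∈ C) : FinitelyDetermined C A k A := by
  refine ⟨hA, fun h hh => ⟨{fun i => h (freeAlg.mk C k (Trm.var i))}, fun p q hpq => ?_⟩⟩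
  rw [hh.eq_eval_of_freeAlg hA]
  exact hpq _ (Finset.mem_singleton_self _)

theorem of_injective {B B' : Alg σ} (hB : B ∈ C) (hB' : FinitelyDetermined C A k B')
    {e : B.carrier → B'.carrier} (he : IsHom B B' e) (hinj : Function.Injective e) :
    FinitelyDetermined C A k B := by
  refine ⟨hB, fun h hh => ?_⟩
  obtain ⟨s, hs⟩ := hB'.2 (e ∘ h) (hh.comp he)
  exact ⟨s, fun p q hpq => hinj (hs p q hpq)⟩

theorem of_surjective {B B' : Alg σ} (hB : FinitelyDetermined C A k B) (hB' : B' ∈ C)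
    {g : B.carrier → B'.carrier} (hg : IsHom B B' g) (hsurj : Function.Surjective g) :
    FinitelyDetermined C A k B' := by
  refine ⟨hB', fun h hh => ?_⟩
  choose lift hlift using hsurj
  let u : Fin (k + 1) → B.carrier := fun i => lift (h (freeAlg.mk C k (Trm.var i)))
  have h_eq : h = g ∘ fun p => Trm.eval B u p.out :=
    freeAlg.hom_ext hh ((freeAlg.isHom_eval hB.1 u).comp hg) fun i =>
      ((congrArg g (freeAlg.eval_out_var hB.1 u i)).trans (hlift _)).symm
  obtain ⟨s, hs⟩ := hB.2 _ (freeAlg.isHom_eval hB.1 u)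
  exact ⟨s, fun p q hpq => by rw [h_eq, Function.comp_apply, Function.comp_apply, hs p q hpq]⟩

theorem pi {ι : Type} [Fintype ι] {As : ι → Alg σ} (hAs : ∀ i, FinitelyDetermined C A k (As i))
    (hC : PiAlg As ∈ C) : FinitelyDetermined C A k (PiAlg As) := by
  classical
  refine ⟨hC, fun h hh => ?_⟩
  have hproj : ∀ i, IsHom (PiAlg As) (As i) fun x => x i := fun _ _ _ => rfl
  choose s hs using fun i => (hAs i).2 _ (hh.comp (hproj i))
  refine ⟨Finset.univ.biUnion s, fun p q hpq => funext fun i => hs i p q fun a ha => ?_⟩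
  exact hpq a (Finset.mem_biUnion.2 ⟨i, Finset.mem_univ _, ha⟩)

theorem of_mem_psvGen (hC : IsVariety C) (hA : A ∈ C) {B : Alg σ} (hB : B ∈ psvGen A) :
    FinitelyDetermined C A k B := by
  refine hB {B | FinitelyDetermined C A k B} (self hA) ?_ ?_ ?_
  · rintro D ⟨D', hD', g, hg, hsurj⟩
    exact hD'.of_surjective (hC.2.2 ⟨D', hD'.1, g, hg, hsurj⟩) hg hsurj
  · rintro D ⟨D', hD', e, he, hinj⟩
    exact of_injective (hC.2.1 ⟨D', hD'.1, e, he, hinj⟩) hD' he hinj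
  · rintro D ⟨n, As, hAs, g, hg, hbij⟩
    have hPi := pi hAs (hC.1 _ As fun i => (hAs i).1)
    exact hPi.of_surjective (hC.2.2 ⟨_, hPi.1, g, hg, hbij.2⟩) hg hbij.2

end FinitelyDetermined

theorem Finset.exists_subset_range_fin_succ {α : Type*} [Nonempty α] (s : Finset α) :
    ∃ (m : ℕ) (f : Fin (m + 1) → α), ↑s ⊆ Set.range f :=
  ⟨s.card, Fin.cons (Classical.arbitrary α) fun i => s.equivFin.symm i,
    fun a ha => ⟨(s.equivFin ⟨a, ha⟩).succ, by simp⟩⟩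

/-- If `θ` is a congruence of `F_k^V` (for `V` the variety
generated by `A`) whose quotient belongs to the pseudovariety of finitely
generated algebras generated by `A`, then (identifying `F_k^V` with the k-ary term
operations of `A`) there are tuples `ā¹, …, ā^m ∈ A^k` with
`U_{ā¹} ∩ ⋯ ∩ U_{ā^m} ⊆ θ`. -/
theorem entourage_below_congruence {σ : Signature} (A : Alg σ) (k : ℕ)
    (θ : Cong (freeAlg (varietyGen A) k))
    (hθ : quotAlg (freeAlg (varietyGen A) k) θ.r ∈ psvFgGen A) :
    ∃ (m : ℕ) (as : Fin (m + 1) → (Fin (k + 1) → A.carrier)),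
      ∀ p q : (freeAlg (varietyGen A) k).carrier,
        (∀ i, Trm.eval A (as i) p.out = Trm.eval A (as i) q.out) → θ.r p q := by
  have hdet : FinitelyDetermined (varietyGen A) A k (quotAlg _ θ.r) :=
    .of_mem_psvGen (varietyGen_isVariety A) (self_mem_varietyGen A) hθ.2
  obtain ⟨s, hs⟩ := hdet.2 _ (isHom_quot_mk θ)
  have : Nonempty A.carrier := A.nonempty
  obtain ⟨m, as, has⟩ := s.exists_subset_range_fin_succ
  refine ⟨m, as, fun p q hpq => (θ.iscon.1.quot_mk_eq_iff p q).mp (hs p q fun a ha => ?_)⟩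
  obtain ⟨i, rfl⟩ := has ha
  exact hpq i
end

section
/- Let A and B be finitely generated τ-algebras. Then B is contained in the pseudovariety generated by A if and only if the natural clone homomorphism from Clo(A) onto Clo(B), sending each term operation t^A to t^B, is well-defined and uniformly continuous with respect to the uniformities of pointwise convergence on Clo(A) and on Clo(B). -/
variable {σ : Signature}

/-! Both conditions together say that `B` is *locally determined* by `A`: for every tuple `b`
of `B` there are finitely many tuples `a₁, …, aₙ` of `A` such that every identity
`s(aᵢ) = t(aᵢ)` holding at all `aᵢ` gives `s(b) = t(b)` (the `aᵢ` describe a basic entourage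
inside the preimage of `U_b`). This property is preserved by homomorphic images, subalgebras
and finite products, and `A` has it over itself, so it holds throughout the pseudovariety.
Conversely, if `b` generates `B`, the tuples `a₁, …, aₙ`, read as one tuple `c` of `Aⁿ`,
generate a subalgebra of `Aⁿ` that maps onto `B` by `t(c) ↦ t(b)`, which is well defined by
local determination. -/

theorem IsHom.map_eval {A B : Alg σ} {φ : A.carrier → B.carrier} (hφ : IsHom A B φ)
    {n : ℕ} (t : Trm σ n) (v : Fin n → A.carrier) :
    φ (t.eval A v) = t.eval B fun i => φ (v i) := by
  induction t with
  | var i => rfl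
  | app f ts ih => exact (hφ f _).trans (congrArg (B.op f) (funext ih))

theorem Trm.eval_piAlg {ι : Type} (A : ι → Alg σ) {n : ℕ} (t : Trm σ n)
    (v : Fin n → (PiAlg A).carrier) (i : ι) :
    t.eval (PiAlg A) v i = t.eval (A i) fun j => v j i := by
  induction t with
  | var j => rfl
  | app f ts ih => exact congrArg ((A i).op f) (funext ih)

theorem InClosure.mono {A : Alg σ} {S T : Set A.carrier} {a : A.carrier}
    (h : InClosure A S a) (hST : S ⊆ T) : InClosure A T a := by
  induction h with
  | base a ha => exact .base a (hST ha)
  | app f x _ ih => exact .app f x ih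

theorem InClosure.exists_term {A : Alg σ} {n : ℕ} {v : Fin n → A.carrier} {a : A.carrier}
    (h : InClosure A (Set.range v) a) : ∃ t : Trm σ n, a = t.eval A v := by
  induction h with
  | base a ha =>
    obtain ⟨j, rfl⟩ := ha
    exact ⟨.var j, rfl⟩
  | app f x _ ih =>
    choose ts hts using ih
    exact ⟨.app f ts, congrArg (A.op f) (funext hts)⟩

theorem Set.Finite.exists_subset_range_fin_succ {α : Type*} {T : Set α} (hT : T.Finite) (x : α) :
    ∃ (n : ℕ) (f : Fin (n + 1) → α), T ⊆ Set.range f := by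
  obtain ⟨n, f, rfl⟩ := hT.fin_embedding
  exact ⟨n, Fin.cons x f, fun _ ⟨i, hi⟩ => ⟨i.succ, hi⟩⟩

theorem FinGen.exists_gen_tuple {B : Alg σ} (hB : FinGen B) :
    ∃ (m : ℕ) (b : Fin (m + 1) → B.carrier), ∀ y, ∃ t : Trm σ (m + 1), y = t.eval B b := by
  obtain ⟨S, hS, hgen⟩ := hB
  obtain ⟨m, b, hSb⟩ := hS.exists_subset_range_fin_succ (Classical.choice B.nonempty)
  exact ⟨m, b, fun y => ((hgen y).mono hSb).exists_term⟩

def genSubAlgGens (A : Alg σ) {n : ℕ} (v : Fin n → A.carrier) (hne : (Set.range v).Nonempty) :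
    Fin n → (genSubAlg A (Set.range v) hne).carrier :=
  fun j => ⟨v j, .base _ (Set.mem_range_self j)⟩

theorem val_eval_genSubAlgGens (A : Alg σ) {n : ℕ} (v : Fin n → A.carrier)
    (hne : (Set.range v).Nonempty) (t : Trm σ n) :
    (t.eval _ (genSubAlgGens A v hne)).1 = t.eval A v :=
  IsHom.map_eval (A := genSubAlg A (Set.range v) hne) (φ := Subtype.val) (fun _ _ => rfl) t _

theorem exists_term_eval_genSubAlgGens (A : Alg σ) {n : ℕ} (v : Fin n → A.carrier)
    (hne : (Set.range v).Nonempty) (x : (genSubAlg A (Set.range v) hne).carrier) :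
    ∃ t : Trm σ n, x = t.eval _ (genSubAlgGens A v hne) := by
  obtain ⟨t, ht⟩ := x.2.exists_term
  exact ⟨t, Subtype.ext (ht.trans (val_eval_genSubAlgGens A v hne t).symm)⟩

theorem exists_surjective_hom_of_eval_eq_imp {G B : Alg σ} {n : ℕ} (c : Fin n → G.carrier)
    (b : Fin n → B.carrier) (hc : ∀ x, ∃ t : Trm σ n, x = t.eval G c)
    (hb : ∀ y, ∃ t : Trm σ n, y = t.eval B b)
    (hcb : ∀ s t : Trm σ n, s.eval G c = t.eval G c → s.eval B b = t.eval B b) :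
    ∃ φ : G.carrier → B.carrier, IsHom G B φ ∧ Function.Surjective φ := by
  choose τ hτ using hc
  have hφ : ∀ t : Trm σ n, (τ (t.eval G c)).eval B b = t.eval B b :=
    fun t => hcb _ _ (hτ _).symm
  refine ⟨fun x => (τ x).eval B b, fun f x => ?_, fun y => ?_⟩
  · have hx : G.op f x = (Trm.app f fun i => τ (x i)).eval G c :=
      congrArg (G.op f) (funext fun i => hτ (x i))
    exact (congrArg (fun x => (τ x).eval B b) hx).trans (hφ _)
  · obtain ⟨t, rfl⟩ := hb y
    exact ⟨t.eval G c, hφ t⟩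

theorem CloK.val_eq_termOp_choose {A : Alg σ} {k : ℕ} (g : CloK A k) :
    g.1 = termOp A (Classical.choose g.2) :=
  Classical.choose_spec g.2

theorem cloNatMap_termOp {A B : Alg σ}
    (hAB : ∀ (k : ℕ) (s t : Trm σ (k + 1)), termOp A s = termOp A t → termOp B s = termOp B t)
    {k : ℕ} (t : Trm σ (k + 1)) : (cloNatMap A B k ⟨termOp A t, t, rfl⟩).1 = termOp B t :=
  hAB k _ t (CloK.val_eq_termOp_choose _).symm

theorem mem_ptwUnif_iff {A : Alg σ} {k : ℕ} {W : Set (CloK A k × CloK A k)} :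
    W ∈ ptwUnif A k ↔ ∃ T : Set (Fin (k + 1) → A.carrier), T.Finite ∧
      {p : CloK A k × CloK A k | ∀ a ∈ T, p.1.1 a = p.2.1 a} ⊆ W := by
  constructor
  · intro hW
    obtain ⟨S, hS, hSfin, hSW⟩ := Filter.mem_generate_iff.1 hW
    have := A.nonempty
    choose! tup htup using hS
    refine ⟨tup '' S, hSfin.image tup, fun p hp => hSW fun U hU => ?_⟩
    rw [htup hU]
    exact hp _ (Set.mem_image_of_mem tup hU)
  · rintro ⟨T, hT, hTW⟩
    refine Filter.mem_of_superset ((Filter.biInter_mem hT).2 fun a _ =>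
      Filter.mem_generate_of_mem ⟨a, rfl⟩) fun p hp => hTW fun a ha => ?_
    exact Set.mem_iInter₂.1 hp a ha

def LocallyDetermined (A B : Alg σ) : Prop :=
  ∀ (k : ℕ) (b : Fin (k + 1) → B.carrier), ∃ T : Set (Fin (k + 1) → A.carrier), T.Finite ∧
    ∀ s t : Trm σ (k + 1), (∀ a ∈ T, s.eval A a = t.eval A a) → s.eval B b = t.eval B b

namespace LocallyDetermined

variable {A B : Alg σ}

theorem termOp_eq (h : LocallyDetermined A B) {k : ℕ} {s t : Trm σ (k + 1)}
    (hst : termOp A s = termOp A t) : termOp B s = termOp B t :=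
  funext fun b =>
    let ⟨_, _, hT⟩ := h k b
    hT s t fun a _ => congrFun hst a

theorem preimage_mem_ptwUnif (h : LocallyDetermined A B) (k : ℕ) {W : Set (CloK B k × CloK B k)}
    (hW : W ∈ ptwUnif B k) :
    Prod.map (cloNatMap A B k) (cloNatMap A B k) ⁻¹' W ∈ ptwUnif A k := by
  suffices hle : (ptwUnif A k).map (Prod.map (cloNatMap A B k) (cloNatMap A B k)) ≤ ptwUnif B k
    from hle hW
  refine Filter.le_generate_iff.2 ?_
  rintro _ ⟨b, rfl⟩
  obtain ⟨T, hT, hTb⟩ := h k b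
  refine mem_ptwUnif_iff.2 ⟨T, hT, fun p hp => hTb _ _ fun a ha => ?_⟩
  exact (congrFun p.1.val_eq_termOp_choose a).symm.trans
    ((hp a ha).trans (congrFun p.2.val_eq_termOp_choose a))

theorem of_cloNatMap
    (hAB : ∀ (k : ℕ) (s t : Trm σ (k + 1)), termOp A s = termOp A t → termOp B s = termOp B t)
    (hunif : ∀ k : ℕ, ∀ W ∈ ptwUnif B k,
      Prod.map (cloNatMap A B k) (cloNatMap A B k) ⁻¹' W ∈ ptwUnif A k) :
    LocallyDetermined A B := by
  intro k b
  obtain ⟨T, hT, hTW⟩ := mem_ptwUnif_iff.1 (hunif k _ (Filter.mem_generate_of_mem ⟨b, rfl⟩))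
  refine ⟨T, hT, fun s t hst => ?_⟩
  have hb : (cloNatMap A B k ⟨termOp A s, s, rfl⟩).1 b =
      (cloNatMap A B k ⟨termOp A t, t, rfl⟩).1 b :=
    @hTW (⟨termOp A s, s, rfl⟩, ⟨termOp A t, t, rfl⟩) hst
  rwa [cloNatMap_termOp hAB, cloNatMap_termOp hAB] at hb

theorem refl (A : Alg σ) : LocallyDetermined A A :=
  fun _ b => ⟨{b}, Set.finite_singleton b, fun _ _ hst => hst b rfl⟩

theorem of_surjective {B' : Alg σ} (h : LocallyDetermined A B) {φ : B.carrier → B'.carrier}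
    (hφ : IsHom B B' φ) (hsurj : Function.Surjective φ) : LocallyDetermined A B' := by
  intro k b'
  choose b hb using fun j => hsurj (b' j)
  obtain ⟨T, hT, hTb⟩ := h k b
  refine ⟨T, hT, fun s t hst => ?_⟩
  rw [show b' = fun j => φ (b j) from funext fun j => (hb j).symm, ← hφ.map_eval,
    ← hφ.map_eval, hTb s t hst]

theorem of_injective {B' : Alg σ} (h : LocallyDetermined A B) {e : B'.carrier → B.carrier}
    (he : IsHom B' B e) (hinj : Function.Injective e) : LocallyDetermined A B' := by
  intro k b'
  obtain ⟨T, hT, hTb⟩ := h k fun j => e (b' j)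
  refine ⟨T, hT, fun s t hst => hinj ?_⟩
  rw [he.map_eval, he.map_eval]
  exact hTb s t hst

theorem piAlg {ι : Type} [Finite ι] {B : ι → Alg σ} (h : ∀ i, LocallyDetermined A (B i)) :
    LocallyDetermined A (PiAlg B) := by
  intro k b
  choose T hT hTb using fun i => h i k fun j => b j i
  refine ⟨⋃ i, T i, Set.finite_iUnion hT, fun s t hst => funext fun i => ?_⟩
  rw [Trm.eval_piAlg, Trm.eval_piAlg]
  exact hTb i s t fun a ha => hst a (Set.mem_iUnion.2 ⟨i, ha⟩)

theorem of_mem_psvGen (hB : B ∈ psvGen A) : LocallyDetermined A B := by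
  refine hB {B | LocallyDetermined A B} (refl A) ?_ ?_ ?_
  · rintro B' ⟨B, hB, φ, hφ, hsurj⟩
    exact of_surjective hB hφ hsurj
  · rintro B' ⟨B, hB, e, he, hinj⟩
    exact of_injective hB he hinj
  · rintro B' ⟨n, B, hB, φ, hφ, hbij⟩
    exact of_surjective (piAlg hB) hφ hbij.surjective

theorem mem_psvGen (h : LocallyDetermined A B) (hB : FinGen B) : B ∈ psvGen A := by
  obtain ⟨m, b, hb⟩ := hB.exists_gen_tuple
  obtain ⟨T, hT, hTb⟩ := h m b
  obtain ⟨n, a, hTa⟩ := hT.exists_subset_range_fin_succ fun _ => Classical.choice A.nonempty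
  let P := PiAlg fun _ : Fin (n + 1) => A
  let c : Fin (m + 1) → P.carrier := fun j i => a i j
  have hne : (Set.range c).Nonempty := ⟨c 0, 0, rfl⟩
  let G := genSubAlg P (Set.range c) hne
  have hcb : ∀ s t : Trm σ (m + 1), s.eval G (genSubAlgGens P c hne) =
      t.eval G (genSubAlgGens P c hne) → s.eval B b = t.eval B b := by
    intro s t hst
    have hPc : s.eval P c = t.eval P c := (val_eval_genSubAlgGens P c hne s).symm.trans
      ((congrArg Subtype.val hst).trans (val_eval_genSubAlgGens P c hne t))
    refine hTb s t fun a' ha' => ?_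
    obtain ⟨i, rfl⟩ := hTa ha'
    exact (Trm.eval_piAlg _ s c i).symm.trans ((congrFun hPc i).trans (Trm.eval_piAlg _ t c i))
  intro C hA hH hS hP
  have hPC : P ∈ C := hP ⟨n, fun _ => A, fun _ => hA, id, fun _ _ => rfl, Function.bijective_id⟩
  have hGC : G ∈ C := hS ⟨P, hPC, Subtype.val, fun _ _ => rfl, Subtype.val_injective⟩
  exact hH ⟨G, hGC,
    exists_surjective_hom_of_eval_eq_imp _ b (exists_term_eval_genSubAlgGens P c hne) hb hcb⟩

end LocallyDetermined

theorem pseudovariety_generated_by_fg_general {σ : Signature} (A B : Alg σ)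
    (hB : FinGen B) :
    B ∈ psvGen A ↔
      (∀ (k : ℕ) (s t : Trm σ (k + 1)), termOp A s = termOp A t → termOp B s = termOp B t) ∧
      (∀ k : ℕ, ∀ W ∈ ptwUnif B k,
          Prod.map (cloNatMap A B k) (cloNatMap A B k) ⁻¹' W ∈ ptwUnif A k) := by
  constructor
  · intro hmem
    have h := LocallyDetermined.of_mem_psvGen hmem
    exact ⟨fun _ _ _ => h.termOp_eq, fun k _ => h.preimage_mem_ptwUnif k⟩
  · rintro ⟨hAB, hunif⟩
    exact (LocallyDetermined.of_cloNatMap hAB hunif).mem_psvGen hB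

/-- Corollary 9 of the paper. For finitely generated τ-algebras
`A` and `B`: `B` lies in the pseudovariety generated by `A` iff the natural clone
homomorphism from `Clo(A)` onto `Clo(B)`, sending `t^A` to `t^B`, is well-defined
and uniformly continuous with respect to the uniformities of pointwise convergence
on `Clo(A)` and on `Clo(B)`. -/
theorem pseudovariety_generated_by_fg {σ : Signature} (A B : Alg σ)
    (hA : FinGen A) (hB : FinGen B) :
    B ∈ psvGen A ↔
      (∀ (k : ℕ) (s t : Trm σ (k + 1)), termOp A s = termOp A t → termOp B s = termOp B t) ∧
      (∀ k : ℕ, ∀ W ∈ ptwUnif B k,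
          Prod.map (cloNatMap A B k) (cloNatMap A B k) ⁻¹' W ∈ ptwUnif A k) :=
  pseudovariety_generated_by_fg_general A B hB
end
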